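/- Let $I$ be a monomial ideal in $R=K[x_1,\dots,x_n]$. Then $I^t[i] = (I[i])^t$ for all $t\ge 1$ and each $i=1,\dots,n$; that is, saturation with respect to $x_i$ commutes with taking powers of monomial ideals. -/

import Mathlib

open MvPolynomial

/-- The monomial ideal generated by the monomials with exponent vectors in `S`. -/
noncomputable def monomialIdeal (K : Type*) [Field K] {n : ℕ} (S : Set (Fin n →₀ ℕ)) :
    Ideal (MvPolynomial (Fin n) K) :=
  Ideal.span ((fun d => monomial d (1 : K)) '' S)

/-- The total degree of an exponent vector. -/
def mdeg {n : ℕ} (u : Fin n →₀ ℕ) : ℕ := u.sum fun _ e => e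

/-- `I` is a monomial ideal. -/
def IsMonomialIdeal {K : Type*} [Field K] {n : ℕ} (I : Ideal (MvPolynomial (Fin n) K)) : Prop :=
  ∃ S : Set (Fin n →₀ ℕ), I = monomialIdeal K S

/-- `I` is a polymatroidal ideal: a monomial ideal generated in a single degree
satisfying the exchange property. -/
def IsPolymatroidal {K : Type*} [Field K] {n : ℕ} (I : Ideal (MvPolynomial (Fin n) K)) : Prop :=
  ∃ S : Set (Fin n →₀ ℕ), I = monomialIdeal K S ∧
    (∃ d : ℕ, ∀ u ∈ S, mdeg u = d) ∧
    ∀ u ∈ S, ∀ v ∈ S, ∀ i : Fin n, v i < u i →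
      ∃ j : Fin n, u j < v j ∧
        monomial (u - Finsupp.single i 1 + Finsupp.single j 1) (1 : K) ∈ I

/-- The graded maximal ideal `(x₁, …, xₙ)`. -/
noncomputable def maxIdl (K : Type*) [Field K] (n : ℕ) : Ideal (MvPolynomial (Fin n) K) :=
  Ideal.span (Set.range X)

/-- The saturation `I[i] = (I : xᵢ^∞)` of `I` with respect to the variable `xᵢ`. -/
noncomputable def sat {K : Type*} [Field K] {n : ℕ} (I : Ideal (MvPolynomial (Fin n) K)) (i : Fin n) :
    Ideal (MvPolynomial (Fin n) K) :=
  ⨆ t : ℕ, I.colon ((Ideal.span {X i ^ t} : Ideal (MvPolynomial (Fin n) K)) : Set (MvPolynomial (Fin n) K))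

/-- The stability index of the sets of associated primes of powers of `I`. -/
noncomputable def astab {K : Type*} [Field K] {n : ℕ}
    (I : Ideal (MvPolynomial (Fin n) K)) : ℕ :=
  sInf {k | 0 < k ∧ ∀ m, k ≤ m →
    associatedPrimes (MvPolynomial (Fin n) K) (MvPolynomial (Fin n) K ⧸ I ^ m) =
      associatedPrimes (MvPolynomial (Fin n) K) (MvPolynomial (Fin n) K ⧸ I ^ k)}

/-- The depth of `R/I`: the longest regular sequence on `R/I` inside the maximal ideal. -/
noncomputable def depthQ {K : Type*} [Field K] {n : ℕ}
    (I : Ideal (MvPolynomial (Fin n) K)) : ℕ :=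
  sSup {k | ∃ rs : List (MvPolynomial (Fin n) K), rs.length = k ∧
    (∀ r ∈ rs, r ∈ maxIdl K n) ∧
    RingTheory.Sequence.IsRegular (MvPolynomial (Fin n) K ⧸ I) rs}

/-- The stability index of the depths of powers of `I`. -/
noncomputable def dstab {K : Type*} [Field K] {n : ℕ}
    (I : Ideal (MvPolynomial (Fin n) K)) : ℕ :=
  sInf {k | 0 < k ∧ ∀ m, k ≤ m → depthQ (I ^ m) = depthQ (I ^ k)}


open Finsupp in
private lemma mem_sat_iff' {K : Type*} [Field K] {n : ℕ} (I : Ideal (MvPolynomial (Fin n) K))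
    (i : Fin n) (f : MvPolynomial (Fin n) K) :
    f ∈ sat I i ↔ ∃ t : ℕ, f * X i ^ t ∈ I := by
  have mono : ∀ a b : ℕ, a ≤ b →
      I.colon ((Ideal.span {X i ^ a} : Ideal (MvPolynomial (Fin n) K)) : Set (MvPolynomial (Fin n) K)) ≤
        I.colon ((Ideal.span {X i ^ b} : Ideal (MvPolynomial (Fin n) K)) : Set (MvPolynomial (Fin n) K)) := by
    intro a b hab g hg
    rw [Ideal.mem_colon_span_singleton] at hg ⊢
    have : g * X i ^ b = g * X i ^ a * X i ^ (b - a) := by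
      rw [mul_assoc, ← pow_add, Nat.add_sub_cancel' hab]
    rw [this]
    exact Ideal.mul_mem_right _ _ hg
  rw [sat, Submodule.mem_iSup_of_directed _
    (fun a b => ⟨max a b, mono _ _ (le_max_left a b), mono _ _ (le_max_right a b)⟩)]
  simp_rw [Ideal.mem_colon_span_singleton]

open Finsupp in
private lemma support_mul_monomial' {K : Type*} [Field K] {n : ℕ} (f : MvPolynomial (Fin n) K)
    (d : Fin n →₀ ℕ) :
    (f * monomial d (1 : K)).support = f.support.map (addRightEmbedding d) := by
  rw [← single_eq_monomial]
  exact AddMonoidAlgebra.support_coeff_mul_single f 1 (by simp) d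

open Pointwise

open Finsupp in
private lemma sat_monomialIdeal' {K : Type*} [Field K] {n : ℕ} (S : Set (Fin n →₀ ℕ)) (i : Fin n) :
    sat (monomialIdeal K S) i = monomialIdeal K (Finsupp.erase i '' S) := by
  ext f
  rw [mem_sat_iff']
  constructor
  · rintro ⟨t, ht⟩
    rw [X_pow_eq_monomial] at ht
    rw [monomialIdeal, mem_ideal_span_monomial_image] at ht ⊢
    intro c hc
    have hc' : c + Finsupp.single i t ∈ (f * monomial (Finsupp.single i t) (1 : K)).support := by
      rw [support_mul_monomial']
      exact Finset.mem_map_of_mem _ hc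
    obtain ⟨d, hdS, hdle⟩ := ht _ hc'
    refine ⟨Finsupp.erase i d, Set.mem_image_of_mem _ hdS, ?_⟩
    intro j
    by_cases hj : j = i
    · subst hj; simp
    · rw [Finsupp.erase_ne hj]
      have := hdle j
      simpa [Finsupp.single_apply, hj, Ne.symm hj] using this
  · intro hf
    rw [monomialIdeal, mem_ideal_span_monomial_image] at hf
    -- write f as a sum of monomials, each of which lies in the saturation
    have key : ∀ c ∈ f.support, ∃ t : ℕ,
        monomial c (coeff c f) * X i ^ t ∈ monomialIdeal K S := by
      intro c hc
      obtain ⟨e, heS, hele⟩ := hf c hc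
      obtain ⟨d, hdS, rfl⟩ := heS
      refine ⟨d i, ?_⟩
      rw [X_pow_eq_monomial, monomial_mul, mul_one, monomialIdeal,
        mem_ideal_span_monomial_image]
      intro c' hc'
      classical
      rw [support_monomial] at hc' 
      have hc'' : c' = c + Finsupp.single i (d i) := by
        by_cases h : coeff c f = 0
        · simp [h] at hc'
        · simpa [h] using hc'
      subst hc''
      refine ⟨d, hdS, fun j => ?_⟩
      by_cases hj : j = i
      · subst hj; simp
      · have := hele j
        rw [Finsupp.erase_ne hj] at this
        simp only [Finsupp.add_apply, Finsupp.single_apply, if_neg (Ne.symm hj)]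
        omega
    have hsat : ∀ c ∈ f.support, monomial c (coeff c f) ∈ sat (monomialIdeal K S) i := by
      intro c hc
      rw [mem_sat_iff']
      exact key c hc
    have hmem := Ideal.sum_mem (sat (monomialIdeal K S) i) hsat
    rw [← as_sum f] at hmem
    exact (mem_sat_iff' _ _ _).mp hmem

private lemma monomialIdeal_mul' {K : Type*} [Field K] {n : ℕ} (S T : Set (Fin n →₀ ℕ)) :
    monomialIdeal K S * monomialIdeal K T = monomialIdeal K (S + T) := by
  rw [monomialIdeal, monomialIdeal, monomialIdeal, Ideal.span_mul_span']
  congr 1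
  rw [← Set.image2_mul, ← Set.image2_add,
    Set.image_image2_distrib (f' := fun x y => x * y) (g₁ := fun d => monomial d (1 : K))
      (g₂ := fun d => monomial d (1 : K)) (fun a b => by simp [monomial_mul])]

open Finsupp in
private lemma erase_image_add' {n : ℕ} (i : Fin n) (S T : Set (Fin n →₀ ℕ)) :
    Finsupp.erase i '' (S + T) = Finsupp.erase i '' S + Finsupp.erase i '' T := by
  rw [← Set.image2_add, ← Set.image2_add]
  exact Set.image_image2_distrib (fun a b => Finsupp.erase_add i a b)

/-- For a monomial ideal `I`, `I^t[i] = (I[i])^t` for all `t ≥ 1`: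
saturation with respect to `xᵢ` commutes with taking powers. -/
theorem stmt4 {K : Type*} [Field K] {n : ℕ} (I : Ideal (MvPolynomial (Fin n) K))
    (hI : IsMonomialIdeal I) (i : Fin n) :
    ∀ t : ℕ, 1 ≤ t → sat (I ^ t) i = (sat I i) ^ t := by
  obtain ⟨S, rfl⟩ := hI
  have key : ∀ t : ℕ, ∃ T : Set (Fin n →₀ ℕ),
      monomialIdeal K S ^ t = monomialIdeal K T ∧
      (sat (monomialIdeal K S) i) ^ t = monomialIdeal K (Finsupp.erase i '' T) := by
    intro t
    induction t with
    | zero =>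
      refine ⟨{0}, ?_, ?_⟩ <;>
        simp [monomialIdeal, Set.image_singleton, Ideal.span_singleton_one]
    | succ t ih =>
      obtain ⟨T, hT1, hT2⟩ := ih
      refine ⟨T + S, ?_, ?_⟩
      · rw [pow_succ, hT1, monomialIdeal_mul']
      · rw [pow_succ, hT2, sat_monomialIdeal', monomialIdeal_mul', erase_image_add']
  intro t _
  obtain ⟨T, hT1, hT2⟩ := key t
  rw [hT1, hT2, sat_monomialIdeal']
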